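/- (Rigorous form of Theorem 1.) Assume α, β > 0, h ≥ 1, P_tx > 0, C > 0, A'_L ≥ A'_N > 0, 0 < γ_L ≤ γ_N, R > 0, v > 0 and τ > 0. Let Φ̄_hov(h) = ∫₀^R Φ̄(h, r) · (2r/R²) dr be the disk-averaged spectral efficiency of the hovering drone and Φ̄_mob(h) = ∫₀^R Φ̄_mob(h, r) · (2r/R²) dr that of the dynamically repositioning drone. Then Φ̄_hov(h) > 0 and the improvement ratio of dynamic repositioning over hovering is bounded above by the ratio of the zero-distance LoS spectral efficiency to the cell-edge NLoS spectral efficiency: Φ̄_mob(h) / Φ̄_hov(h) ≤ log₂(1 + P_tx · A'_L · h^(−γ_L) / C) / log₂(1 + P_tx · A'_N · (h² + R²)^(−γ_N/2) / C). -/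

import Mathlib

/-- LoS probability: at ground distance `r > 0` the elevation angle in degrees is
`(180/π) · arctan (h/r)`; at `r = 0` the angle is 90 degrees. -/
noncomputable def PLoS (a b h r : ℝ) : ℝ :=
  if r = 0 then 1 / (1 + a * Real.exp (-b * (90 - a)))
  else 1 / (1 + a * Real.exp (-b * ((180 / Real.pi) * Real.arctan (h / r) - a)))

/-- LoS spectral efficiency. -/
noncomputable def PhiL (Ptx Cst AL gL h r : ℝ) : ℝ :=
  Real.logb 2 (1 + Ptx * AL * (h ^ 2 + r ^ 2) ^ (-(gL / 2)) / Cst)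

/-- NLoS spectral efficiency. -/
noncomputable def PhiN (Ptx Cst AN gN h r : ℝ) : ℝ :=
  Real.logb 2 (1 + Ptx * AN * (h ^ 2 + r ^ 2) ^ (-(gN / 2)) / Cst)

/-- Average spectral efficiency: LoS/NLoS mixture weighted by the LoS probability. -/
noncomputable def Phibar (a b Ptx Cst AL AN gL gN h r : ℝ) : ℝ :=
  PLoS a b h r * PhiL Ptx Cst AL gL h r + (1 - PLoS a b h r) * PhiN Ptx Cst AN gN h r

/-- Time-averaged spectral efficiency of the dynamically repositioning drone:
it flies toward the user at speed `v` for time `t_m = min (r/v) τ` and hovers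
above the user for the remaining time. -/
noncomputable def Phimob (a b Ptx Cst AL AN gL gN h v τ r : ℝ) : ℝ :=
  if r = 0 then Phibar a b Ptx Cst AL AN gL gN h 0
  else
    (min (r / v) τ / τ) *
        ((1 / (v * min (r / v) τ)) *
          ∫ x in (r - v * min (r / v) τ)..r, Phibar a b Ptx Cst AL AN gL gN h x) +
      (1 - min (r / v) τ / τ) * Phibar a b Ptx Cst AL AN gL gN h 0

/-!
For `r ∈ [0, R]` the path gain decreases with distance, and the NLoS link is never better
than the LoS link, so `Φ̄(h, r)`, a convex combination of `Φ_L` and `Φ_N`, lies between the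
cell-edge NLoS value `m = Φ_N(h, R) > 0` and the zero-distance LoS value `M = Φ_L(h, 0)`.
The hovering average is then at least `m`. The repositioning efficiency at `r` is a convex
combination of an average of `Φ̄` over `[r - v t_m, r] ⊆ [0, r]` and of `Φ̄(h, 0)`, hence at
most `M`, and so is its disk average. Thus the ratio is at most `M / m`.
-/

open Set

lemma PLoS_nonneg {a : ℝ} (b h r : ℝ) (ha : 0 ≤ a) : 0 ≤ PLoS a b h r := by
  unfold PLoS
  split_ifs <;> positivity

lemma PLoS_le_one {a : ℝ} (b h r : ℝ) (ha : 0 ≤ a) : PLoS a b h r ≤ 1 := by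
  unfold PLoS
  split_ifs <;> exact div_le_one_of_le₀ (le_add_of_nonneg_right (by positivity)) (by positivity)

lemma PhiN_eq_PhiL : PhiN = PhiL := rfl

lemma PhiL_zero (Ptx Cst A g : ℝ) {h : ℝ} (hh : 0 ≤ h) :
    PhiL Ptx Cst A g h 0 = Real.logb 2 (1 + Ptx * A * h ^ (-g) / Cst) := by
  unfold PhiL
  rw [zero_pow two_ne_zero, add_zero, ← Real.rpow_natCast, ← Real.rpow_mul hh, Nat.cast_ofNat,
    show (2 : ℝ) * -(g / 2) = -g by ring]

lemma logb_two_one_add_div_le {x y C : ℝ} (hC : 0 < C) (hx : 0 ≤ x) (hxy : x ≤ y) :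
    Real.logb 2 (1 + x / C) ≤ Real.logb 2 (1 + y / C) :=
  Real.logb_le_logb_of_le one_lt_two (by positivity) (by gcongr)

lemma PhiL_antitoneOn {Ptx Cst A g h : ℝ} (hPtx : 0 ≤ Ptx) (hC : 0 < Cst) (hA : 0 ≤ A)
    (hg : 0 ≤ g) (hh : h ≠ 0) : AntitoneOn (PhiL Ptx Cst A g h) (Ici 0) := by
  intro r hr s _ hrs
  apply logb_two_one_add_div_le hC (by positivity)
  exact mul_le_mul_of_nonneg_left
    (Real.rpow_le_rpow_of_nonpos (by positivity) (by gcongr) (by linarith)) (by positivity)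

lemma PhiN_le_PhiL {Ptx Cst AL AN gL gN h : ℝ} (r : ℝ) (hPtx : 0 ≤ Ptx) (hC : 0 < Cst)
    (hAN : 0 ≤ AN) (hALN : AN ≤ AL) (hgLN : gL ≤ gN) (hh : 1 ≤ h) :
    PhiN Ptx Cst AN gN h r ≤ PhiL Ptx Cst AL gL h r := by
  apply logb_two_one_add_div_le hC (by positivity)
  exact mul_le_mul (mul_le_mul_of_nonneg_left hALN hPtx)
    (Real.rpow_le_rpow_of_exponent_le (by nlinarith) (by linarith)) (by positivity)
    (mul_nonneg hPtx (hAN.trans hALN))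

section Mixture

variable {a b Ptx Cst AL AN gL gN h r : ℝ}

lemma PhiN_le_Phibar (ha : 0 ≤ a) (hNL : PhiN Ptx Cst AN gN h r ≤ PhiL Ptx Cst AL gL h r) :
    PhiN Ptx Cst AN gN h r ≤ Phibar a b Ptx Cst AL AN gL gN h r := by
  have := mul_nonneg (PLoS_nonneg b h r ha) (sub_nonneg.2 hNL)
  unfold Phibar
  linarith

lemma Phibar_le_PhiL (ha : 0 ≤ a) (hNL : PhiN Ptx Cst AN gN h r ≤ PhiL Ptx Cst AL gL h r) :
    Phibar a b Ptx Cst AL AN gL gN h r ≤ PhiL Ptx Cst AL gL h r := by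
  have := mul_nonneg (sub_nonneg.2 (PLoS_le_one b h r ha)) (sub_nonneg.2 hNL)
  unfold Phibar
  linarith

end Mixture

lemma Phibar_measurable (a b Ptx Cst AL AN gL gN h : ℝ) :
    Measurable (Phibar a b Ptx Cst AL AN gL gN h) := by
  have hPLoS : Measurable (PLoS a b h) :=
    Measurable.ite measurableSet_eq measurable_const (by fun_prop)
  unfold Phibar PhiL PhiN Real.logb
  fun_prop

lemma one_div_mul_integral_le_of_abs_le {f : ℝ → ℝ} {c ℓ M : ℝ} (hℓ : 0 < ℓ)
    (hf : ∀ x ∈ Icc (c - ℓ) c, |f x| ≤ M) :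
    1 / ℓ * ∫ x in (c - ℓ)..c, f x ≤ M := by
  have hI : |∫ x in (c - ℓ)..c, f x| ≤ M * ℓ := by
    have := intervalIntegral.norm_integral_le_of_norm_le_const (a := c - ℓ) (b := c) (C := M)
      fun x hx => (Real.norm_eq_abs _).trans_le <|
        hf x (Ioc_subset_Icc_self (by rwa [uIoc_of_le (by linarith)] at hx))
    rwa [sub_sub_cancel, abs_of_pos hℓ] at this
  calc 1 / ℓ * ∫ x in (c - ℓ)..c, f x ≤ 1 / ℓ * (M * ℓ) := by
        gcongr
        exact (le_abs_self _).trans hI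
    _ = M := by field_simp

lemma Phimob_le {a b Ptx Cst AL AN gL gN h v τ r M : ℝ} (hv : 0 < v) (hτ : 0 < τ)
    (hr : 0 ≤ r) (hM : ∀ x ∈ Icc 0 r, |Phibar a b Ptx Cst AL AN gL gN h x| ≤ M) :
    Phimob a b Ptx Cst AL AN gL gN h v τ r ≤ M := by
  have h0 : Phibar a b Ptx Cst AL AN gL gN h 0 ≤ M :=
    (le_abs_self _).trans (hM 0 ⟨le_rfl, hr⟩)
  unfold Phimob
  split_ifs with hr0
  · exact h0
  set t := min (r / v) τ
  have ht : 0 < t := lt_min (div_pos (lt_of_le_of_ne hr (Ne.symm hr0)) hv) hτ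
  have hvt : v * t ≤ r := (le_div_iff₀' hv).1 (min_le_left _ _)
  have hθ : 0 ≤ 1 - t / τ := sub_nonneg.2 ((div_le_one hτ).2 (min_le_right _ _))
  have havg := one_div_mul_integral_le_of_abs_le (mul_pos hv ht)
    fun x hx => hM x ⟨by linarith [hx.1], hx.2⟩
  calc t / τ * (1 / (v * t) * ∫ x in (r - v * t)..r, Phibar a b Ptx Cst AL AN gL gN h x) +
        (1 - t / τ) * Phibar a b Ptx Cst AL AN gL gN h 0
      ≤ t / τ * M + (1 - t / τ) * M := by
        gcongr
    _ = M := by ring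

/-- `2 r / R ^ 2` is the density of the distance to the center of a uniform point of the disk
of radius `R`. -/
noncomputable def diskAverage (R : ℝ) (f : ℝ → ℝ) : ℝ :=
  ∫ r in (0:ℝ)..R, f r * (2 * r / R ^ 2)

lemma diskAverage_const {R : ℝ} (hR : R ≠ 0) (c : ℝ) : diskAverage R (fun _ ↦ c) = c := by
  have hlin : ∀ r : ℝ, c * (2 * r / R ^ 2) = 2 * c / R ^ 2 * r := fun r ↦ by ring
  simp only [diskAverage, hlin]
  rw [intervalIntegral.integral_const_mul, integral_id]
  field_simp
  ring

lemma le_diskAverage {R m : ℝ} {f : ℝ → ℝ} (hR : 0 < R)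
    (hf : IntervalIntegrable f MeasureTheory.volume 0 R) (hm : ∀ r ∈ Icc 0 R, m ≤ f r) :
    m ≤ diskAverage R f := by
  have hweight : ContinuousOn (fun r : ℝ ↦ 2 * r / R ^ 2) (uIcc 0 R) := by fun_prop
  calc m = diskAverage R (fun _ ↦ m) := (diskAverage_const hR.ne' m).symm
    _ ≤ diskAverage R f :=
      intervalIntegral.integral_mono_on hR.le (Continuous.intervalIntegrable (by fun_prop) _ _)
        (hf.mul_continuousOn hweight)
        fun r hr ↦ mul_le_mul_of_nonneg_right (hm r hr) (by have := hr.1; positivity)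

/-- When the average is undefined the integral is `0`, hence the hypothesis `0 ≤ M`. -/
lemma diskAverage_le {R M : ℝ} {f : ℝ → ℝ} (hR : 0 < R) (hM₀ : 0 ≤ M)
    (hM : ∀ r ∈ Icc 0 R, f r ≤ M) : diskAverage R f ≤ M := by
  by_cases hf : IntervalIntegrable (fun r ↦ f r * (2 * r / R ^ 2)) MeasureTheory.volume 0 R
  · calc diskAverage R f ≤ diskAverage R (fun _ ↦ M) :=
          intervalIntegral.integral_mono_on hR.le hf
            (Continuous.intervalIntegrable (by fun_prop) _ _)
            fun r hr ↦ mul_le_mul_of_nonneg_right (hM r hr) (by have := hr.1; positivity)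
      _ = M := diskAverage_const hR.ne' M
  · rw [diskAverage, intervalIntegral.integral_undef hf]
    exact hM₀

lemma intervalIntegrable_of_abs_le {f : ℝ → ℝ} {a b M : ℝ} (hab : a ≤ b) (hf : Measurable f)
    (hM : ∀ x ∈ Icc a b, |f x| ≤ M) : IntervalIntegrable f MeasureTheory.volume a b := by
  refine (intervalIntegrable_const (c := M)).mono_fun' hf.aestronglyMeasurable ?_
  filter_upwards [MeasureTheory.ae_restrict_mem measurableSet_uIoc] with x hx
  rw [uIoc_of_le hab] at hx
  exact hM x (Ioc_subset_Icc_self hx)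

theorem se_improvement_ratio_upper_bound_general (a b Ptx Cst AL AN gL gN h R v τ : ℝ)
    (ha : 0 < a) (hh : 1 ≤ h) (hPtx : 0 < Ptx) (hC : 0 < Cst)
    (hAN : 0 < AN) (hALN : AN ≤ AL) (hgL : 0 < gL) (hgLN : gL ≤ gN)
    (hR : 0 < R) (hv : 0 < v) (hτ : 0 < τ) :
    0 < (∫ r in (0:ℝ)..R, Phibar a b Ptx Cst AL AN gL gN h r * (2 * r / R ^ 2)) ∧
    (∫ r in (0:ℝ)..R, Phimob a b Ptx Cst AL AN gL gN h v τ r * (2 * r / R ^ 2)) /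
        (∫ r in (0:ℝ)..R, Phibar a b Ptx Cst AL AN gL gN h r * (2 * r / R ^ 2)) ≤
      Real.logb 2 (1 + Ptx * AL * h ^ (-gL) / Cst) /
        Real.logb 2 (1 + Ptx * AN * (h ^ 2 + R ^ 2) ^ (-(gN / 2)) / Cst) := by
  have hh₀ : 0 < h := one_pos.trans_le hh
  set Φ := Phibar a b Ptx Cst AL AN gL gN h
  set M := Real.logb 2 (1 + Ptx * AL * h ^ (-gL) / Cst)
  set m := Real.logb 2 (1 + Ptx * AN * (h ^ 2 + R ^ 2) ^ (-(gN / 2)) / Cst)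
  have hbounds : ∀ r ∈ Icc 0 R, m ≤ Φ r ∧ Φ r ≤ M := fun r hr ↦ by
    have hNL := PhiN_le_PhiL r hPtx.le hC hAN.le hALN hgLN hh
    have hN := PhiN_eq_PhiL ▸ PhiL_antitoneOn hPtx.le hC hAN.le (hgL.trans_le hgLN).le hh₀.ne'
    have hL := PhiL_antitoneOn hPtx.le hC (hAN.le.trans hALN) hgL.le hh₀.ne'
    exact ⟨(hN hr.1 hR.le hr.2).trans (PhiN_le_Phibar ha.le hNL),
      (Phibar_le_PhiL ha.le hNL).trans
        ((hL self_mem_Ici hr.1 hr.1).trans_eq (PhiL_zero _ _ _ _ hh₀.le))⟩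
  have hm : 0 < m := Real.logb_pos one_lt_two (lt_add_of_pos_right 1 (by positivity))
  have habs : ∀ r ∈ Icc 0 R, |Φ r| ≤ M := fun r hr ↦
    abs_le.2 ⟨by linarith [hbounds r hr], (hbounds r hr).2⟩
  have hhov : m ≤ diskAverage R Φ :=
    le_diskAverage hR (intervalIntegrable_of_abs_le hR.le (Phibar_measurable ..) habs)
      fun r hr ↦ (hbounds r hr).1
  obtain ⟨hm0, h0M⟩ := hbounds 0 (left_mem_Icc.2 hR.le)
  have hM : 0 < M := hm.trans_le (hm0.trans h0M)
  have hmob : diskAverage R (Phimob a b Ptx Cst AL AN gL gN h v τ) ≤ M :=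
    diskAverage_le hR hM.le
      fun r hr ↦ Phimob_le hv hτ hr.1 fun x hx ↦ habs x ⟨hx.1, hx.2.trans hr.2⟩
  exact ⟨hm.trans_le hhov, div_le_div₀ hM.le hmob hm hhov⟩

/-- Rigorous form of Theorem 1: the disk-averaged spectral efficiency of the hovering
drone is positive, and the improvement ratio of dynamic repositioning over hovering is
bounded above by the ratio of the zero-distance LoS spectral efficiency to the
cell-edge NLoS spectral efficiency. -/
theorem se_improvement_ratio_upper_bound (a b Ptx Cst AL AN gL gN h R v τ : ℝ)
    (ha : 0 < a) (hb : 0 < b) (hh : 1 ≤ h) (hPtx : 0 < Ptx) (hC : 0 < Cst)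
    (hAN : 0 < AN) (hALN : AN ≤ AL) (hgL : 0 < gL) (hgLN : gL ≤ gN)
    (hR : 0 < R) (hv : 0 < v) (hτ : 0 < τ) :
    0 < (∫ r in (0:ℝ)..R, Phibar a b Ptx Cst AL AN gL gN h r * (2 * r / R ^ 2)) ∧
    (∫ r in (0:ℝ)..R, Phimob a b Ptx Cst AL AN gL gN h v τ r * (2 * r / R ^ 2)) /
        (∫ r in (0:ℝ)..R, Phibar a b Ptx Cst AL AN gL gN h r * (2 * r / R ^ 2)) ≤
      Real.logb 2 (1 + Ptx * AL * h ^ (-gL) / Cst) /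
        Real.logb 2 (1 + Ptx * AN * (h ^ 2 + R ^ 2) ^ (-(gN / 2)) / Cst) :=
  se_improvement_ratio_upper_bound_general a b Ptx Cst AL AN gL gN h R v τ ha hh hPtx hC hAN hALN
    hgL hgLN hR hv hτ
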